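/- arXiv:1010.1620 — 3 statements merged into one kernel-verified Lean document; each statement's English description precedes it below -/
import Mathlib

section
/- (Projection onto the component r^{2s}·Har.) Let m ≥ 2 and let P be a complex polynomial in m variables, homogeneous of degree n, written as P = ∑_{j=0}^{⌊n/2⌋} r^{2j}·H_j with each H_j harmonic and homogeneous of degree n-2j. Then for every s ≤ ⌊n/2⌋ there exists a polynomial Q such that Δ^s P = 2^s · s! · (∏_{t=0}^{s-1}(2(n-2s) + m + 2t)) · H_s + r²·Q. -/
open MvPolynomial Finset

noncomputable section

/-- The Laplacian `ΔP = ∑ ∂_i² P`. -/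
def lap (m : ℕ) (P : MvPolynomial (Fin m) ℂ) : MvPolynomial (Fin m) ℂ :=
  ∑ i, pderiv i (pderiv i P)

/-- The Euler operator `E P = ∑ X_i ∂_i P`. -/
def eulerOp (m : ℕ) (P : MvPolynomial (Fin m) ℂ) : MvPolynomial (Fin m) ℂ :=
  ∑ i, X i * pderiv i P

/-- The polynomial `r² = ∑ X_i²`. -/
def r2 (m : ℕ) : MvPolynomial (Fin m) ℂ := ∑ i, X i ^ 2

/-- The Fischer inner product `⟨P,Q⟩ = ∑_α (∏_i α_i!)·conj(coeff_α P)·coeff_α Q`. -/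
def fischer (m : ℕ) (P Q : MvPolynomial (Fin m) ℂ) : ℂ :=
  ∑ α ∈ P.support, (∏ i, ((α i).factorial : ℂ)) * (starRingEnd ℂ) (coeff α P) * coeff α Q

/-!
Multiplying by `r²` interacts with the Laplacian through `Δ(r² p) = r² Δp + 4 E p + 2m p`,
where `E` is the Euler operator, which acts on homogeneous polynomials of degree `e` as
multiplication by `e`. Hence if `h` is harmonic and homogeneous of degree `d`, then
`Δ(r^{2(k+1)} h) = 2(k+1)(2k + m + 2d) · r^{2k} h`. Applying `Δ^s` to `∑ r^{2j} H_j` therefore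
kills the terms with `j < s`, leaves a multiple of `r²` for `j > s`, and turns `r^{2s} H_s` into
`∏_{k<s} 2(k+1)(2k + m + 2(n-2s)) · H_s`.
-/

section ChainOfEigenvectors

variable {R M : Type*} [CommSemiring R] [AddCommMonoid M] [Module R M]
  (f : Module.End R M) (v : ℕ → M) (c : ℕ → R)

theorem Module.End.pow_apply_add_of_apply_succ (hf : ∀ j, f (v (j + 1)) = c j • v j)
    (s j : ℕ) : (f ^ s) (v (j + s)) = (∏ k ∈ range s, c (j + k)) • v j := by
  induction s generalizing j with
  | zero => simp
  | succ s ih =>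
    rw [pow_succ, Module.End.mul_apply, ← add_assoc, hf, map_smul, ih, smul_smul,
      prod_range_succ, mul_comm]

theorem Module.End.pow_apply_eq_zero_of_apply_succ (hf : ∀ j, f (v (j + 1)) = c j • v j)
    (hf₀ : f (v 0) = 0) {s j : ℕ} (hjs : j < s) : (f ^ s) (v j) = 0 := by
  obtain ⟨t, rfl⟩ : ∃ t, s = t + 1 + j := ⟨s - j - 1, by omega⟩
  have hv := f.pow_apply_add_of_apply_succ v c hf j 0
  rw [zero_add] at hv
  rw [pow_add, Module.End.mul_apply, hv, pow_succ, Module.End.mul_apply, map_smul, hf₀,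
    smul_zero, map_zero]

end ChainOfEigenvectors

variable {m : ℕ}

def lapEnd (m : ℕ) : Module.End ℂ (MvPolynomial (Fin m) ℂ) :=
  ∑ i, (pderiv i).toLinearMap ∘ₗ (pderiv i).toLinearMap

theorem lapEnd_apply (P : MvPolynomial (Fin m) ℂ) : lapEnd m P = lap m P := by
  simp [lapEnd, lap]

theorem lap_iterate_eq_lapEnd_pow (s : ℕ) : (lap m)^[s] = ⇑(lapEnd m ^ s) := by
  rw [Module.End.coe_pow]
  congr 1
  funext P
  exact (lapEnd_apply P).symm

theorem pderiv_r2 (i : Fin m) : pderiv i (r2 m) = 2 * X i := by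
  rw [r2, map_sum, sum_eq_single i (fun j _ hji => by simp [pderiv_X_of_ne hji]) (by simp)]
  simp

theorem r2_isHomogeneous : (r2 m).IsHomogeneous 2 :=
  IsHomogeneous.sum _ _ _ fun i _ => by simpa using (isHomogeneous_X ℂ i).pow 2

theorem eulerOp_eq_smul {e : ℕ} {p : MvPolynomial (Fin m) ℂ} (hp : p.IsHomogeneous e) :
    eulerOp m p = (e : ℂ) • p := by
  rw [eulerOp, hp.sum_X_mul_pderiv, Nat.cast_smul_eq_nsmul]

theorem lap_r2_mul (p : MvPolynomial (Fin m) ℂ) :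
    lap m (r2 m * p) = r2 m * lap m p + 4 * eulerOp m p + 2 * m * p := by
  have hpderiv2 : ∀ i : Fin m, pderiv i (pderiv i (r2 m * p)) =
      r2 m * pderiv i (pderiv i p) + 4 * (X i * pderiv i p) + 2 * p := by
    intro i
    have h2 : pderiv i (2 : MvPolynomial (Fin m) ℂ) = 0 := by
      rw [← map_ofNat C 2, pderiv_C]
    simp only [pderiv_mul, pderiv_r2, map_add, h2, zero_mul, pderiv_X_self, mul_one, zero_add]
    ring
  simp only [lap, eulerOp, hpderiv2, sum_add_distrib, ← mul_sum, sum_const, card_univ,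
    Fintype.card_fin, nsmul_eq_mul]
  ring

theorem lap_r2_mul_of_isHomogeneous {e : ℕ} {p : MvPolynomial (Fin m) ℂ}
    (hp : p.IsHomogeneous e) :
    lap m (r2 m * p) = r2 m * lap m p + (4 * e + 2 * m : ℂ) • p := by
  rw [lap_r2_mul, eulerOp_eq_smul hp]
  simp only [smul_eq_C_mul, map_add, map_mul, map_natCast, map_ofNat]
  ring

def radialLapCoeff (m d k : ℕ) : ℂ := 2 * (k + 1) * (2 * k + m + 2 * d)

theorem lap_r2_pow_succ_mul {d : ℕ} {h : MvPolynomial (Fin m) ℂ} (hhom : h.IsHomogeneous d)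
    (hharm : lap m h = 0) (k : ℕ) :
    lap m (r2 m ^ (k + 1) * h) = radialLapCoeff m d k • (r2 m ^ k * h) := by
  induction k with
  | zero =>
    rw [pow_one, lap_r2_mul_of_isHomogeneous hhom, hharm, mul_zero, zero_add, pow_zero,
      one_mul, radialLapCoeff]
    congr 1
    push_cast
    ring
  | succ k ih =>
    have hhom' : (r2 m ^ (k + 1) * h).IsHomogeneous (2 * (k + 1) + d) :=
      (r2_isHomogeneous.pow (k + 1)).mul hhom
    rw [pow_succ', mul_assoc, lap_r2_mul_of_isHomogeneous hhom', ih, mul_smul_comm, ← mul_assoc,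
      ← pow_succ', ← add_smul, radialLapCoeff, radialLapCoeff]
    congr 1
    push_cast
    ring

theorem r2_dvd_lap_iterate_r2_pow_mul_sub {d : ℕ} {h : MvPolynomial (Fin m) ℂ}
    (hhom : h.IsHomogeneous d) (hharm : lap m h = 0) (s j : ℕ) :
    r2 m ∣ (lap m)^[s] (r2 m ^ j * h)
      - if j = s then (∏ k ∈ range s, radialLapCoeff m d k) • h else 0 := by
  set v : ℕ → MvPolynomial (Fin m) ℂ := fun k => r2 m ^ k * h
  have hchain : ∀ k, lapEnd m (r2 m ^ (k + 1) * h) = radialLapCoeff m d k • (r2 m ^ k * h) :=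
    fun k => by rw [lapEnd_apply, lap_r2_pow_succ_mul hhom hharm]
  have hbase : lapEnd m (r2 m ^ 0 * h) = 0 := by rw [pow_zero, one_mul, lapEnd_apply, hharm]
  rw [lap_iterate_eq_lapEnd_pow]
  rcases lt_trichotomy j s with hjs | rfl | hsj
  · rw [(lapEnd m).pow_apply_eq_zero_of_apply_succ v _ hchain hbase hjs, if_neg hjs.ne, sub_zero]
    exact dvd_zero _
  · have h0 := (lapEnd m).pow_apply_add_of_apply_succ v _ hchain j 0
    simp only [zero_add, v, pow_zero, one_mul] at h0
    rw [h0, if_pos rfl, sub_self]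
    exact dvd_zero _
  · obtain ⟨i, rfl⟩ : ∃ i, j = i + 1 + s := ⟨j - s - 1, by omega⟩
    rw [(lapEnd m).pow_apply_add_of_apply_succ v _ hchain, if_neg (by omega), sub_zero,
      smul_eq_C_mul]
    exact dvd_mul_of_dvd_right (dvd_mul_of_dvd_left (dvd_pow_self _ i.succ_ne_zero) h) _

theorem prod_radialLapCoeff (m d s : ℕ) :
    ∏ k ∈ range s, radialLapCoeff m d k
      = 2 ^ s * s.factorial * ∏ t ∈ range s, (2 * d + m + 2 * t : ℂ) := by
  calc ∏ k ∈ range s, radialLapCoeff m d k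
      = ∏ k ∈ range s, 2 * ((k + 1 : ℕ) : ℂ) * (2 * d + m + 2 * k) :=
        prod_congr rfl fun k _ => by rw [radialLapCoeff]; push_cast; ring
    _ = 2 ^ s * s.factorial * ∏ t ∈ range s, (2 * d + m + 2 * t : ℂ) := by
        rw [prod_mul_distrib, prod_mul_distrib, prod_const, card_range, ← Nat.cast_prod,
          prod_range_add_one_eq_factorial]

theorem stmt4_general (m n : ℕ) (P : MvPolynomial (Fin m) ℂ)
    (H : ℕ → MvPolynomial (Fin m) ℂ)
    (hharm : ∀ j ≤ n / 2, lap m (H j) = 0)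
    (hhom : ∀ j ≤ n / 2, (H j).IsHomogeneous (n - 2 * j))
    (hdecomp : P = ∑ j ∈ range (n / 2 + 1), r2 m ^ j * H j)
    (s : ℕ) (hs : s ≤ n / 2) :
    ∃ Q, (lap m)^[s] P
      = ((2 : ℂ) ^ s * (Nat.factorial s : ℂ)
          * ∏ t ∈ range s, (2 * ((n : ℂ) - 2 * (s : ℂ)) + (m : ℂ) + 2 * (t : ℂ))) • H s
        + r2 m * Q := by
  have hcoeff : ∏ k ∈ range s, radialLapCoeff m (n - 2 * s) k
      = 2 ^ s * s.factorial * ∏ t ∈ range s, (2 * ((n : ℂ) - 2 * s) + m + 2 * t) := by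
    rw [prod_radialLapCoeff, Nat.cast_sub (by omega)]
    push_cast
    rfl
  have hdvd : r2 m ∣ (lap m)^[s] P - (∏ k ∈ range s, radialLapCoeff m (n - 2 * s) k) • H s := by
    have hterm := fun j (hj : j ∈ range (n / 2 + 1)) =>
      have hj : j ≤ n / 2 := mem_range_succ_iff.mp hj
      r2_dvd_lap_iterate_r2_pow_mul_sub (hhom j hj) (hharm j hj) s j
    convert dvd_sum hterm using 1
    rw [sum_sub_distrib, sum_ite_eq', if_pos (mem_range.2 (by omega)), hdecomp,
      lap_iterate_eq_lapEnd_pow, map_sum]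
  obtain ⟨Q, hQ⟩ := hdvd
  exact ⟨Q, by rw [← hcoeff, ← hQ, add_sub_cancel]⟩

theorem stmt4 (m n : ℕ) (hm : 2 ≤ m) (P : MvPolynomial (Fin m) ℂ)
    (hP : P.IsHomogeneous n)
    (H : ℕ → MvPolynomial (Fin m) ℂ)
    (hharm : ∀ j ≤ n / 2, lap m (H j) = 0)
    (hhom : ∀ j ≤ n / 2, (H j).IsHomogeneous (n - 2 * j))
    (hdecomp : P = ∑ j ∈ range (n / 2 + 1), r2 m ^ j * H j)
    (s : ℕ) (hs : s ≤ n / 2) :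
    ∃ Q, (lap m)^[s] P
      = ((2 : ℂ) ^ s * (Nat.factorial s : ℂ)
          * ∏ t ∈ range s, (2 * ((n : ℂ) - 2 * (s : ℂ)) + (m : ℂ) + 2 * (t : ℂ))) • H s
        + r2 m * Q :=
  stmt4_general m n P H hharm hhom hdecomp s hs

end
end

section
/- (Explicit harmonic projection of |u|^{2s}·P_k·Q_i.) Let m = p + q with p, q ≥ 1, let s, k, i ∈ ℕ, let P_k be a harmonic polynomial in the u-variables homogeneous of degree k, and Q_i a harmonic polynomial in the v-variables homogeneous of degree i. Set λ := (-1)^s · 2^s · s! / ∏_{t=0}^{s-1}(2s + 2k + 2i + m - 2 + 2t), and for 0 ≤ j ≤ s set b_j := (∏_{t=0}^{j-1}(2k + p - 2 + 2s - 2t))/(2^j·j!) · (∏_{t=0}^{s-j-1}(2i + q - 2 + 2s - 2t))/(2^{s-j}·(s-j)!). Then H := λ · ∑_{j=0}^{s} (-1)^{s-j}·b_j·|v|^{2j}·|u|^{2(s-j)}·P_k·Q_i is harmonic in all m variables, and |u|^{2s}·P_k·Q_i - H = r²·R for some polynomial R. (H is the expansion in powers of |u|², |v|² of λ·r^{2s}·P_s^{(k+(p-2)/2,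 i+(q-2)/2)}((|v|²-|u|²)/(|v|²+|u|²))·P_k·Q_i, where P_s^{(α,β)} is a Jacobi polynomial.) -/
open MvPolynomial Finset

noncomputable section

/-- The Laplacian in the `u`-variables (the first `p` variables). -/
def lapU (p q : ℕ) (F : MvPolynomial (Fin (p + q)) ℂ) : MvPolynomial (Fin (p + q)) ℂ :=
  ∑ i ∈ univ.filter (fun i : Fin (p + q) => (i : ℕ) < p), pderiv i (pderiv i F)

/-- The Laplacian in the `v`-variables (the last `q` variables). -/
def lapV (p q : ℕ) (F : MvPolynomial (Fin (p + q)) ℂ) : MvPolynomial (Fin (p + q)) ℂ :=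
  ∑ i ∈ univ.filter (fun i : Fin (p + q) => p ≤ (i : ℕ)), pderiv i (pderiv i F)

/-- `|u|² = ∑_{i<p} X_i²`. -/
def u2 (p q : ℕ) : MvPolynomial (Fin (p + q)) ℂ :=
  ∑ i ∈ univ.filter (fun i : Fin (p + q) => (i : ℕ) < p), X i ^ 2

/-- `|v|² = ∑_{i≥p} X_i²`. -/
def v2 (p q : ℕ) : MvPolynomial (Fin (p + q)) ℂ :=
  ∑ i ∈ univ.filter (fun i : Fin (p + q) => p ≤ (i : ℕ)), X i ^ 2

/-!
Write `A = |u|²`, `B = |v|²`. If `P` is harmonic and homogeneous of degree `d` in a set `S` of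
variables, Euler's identity gives `Δ(A^a P) = 2a(2a + 2d + |S| - 2) A^(a-1) P`, and the Laplacian
of a product of polynomials in disjoint sets of variables has no cross term. So
`Δ ∑ⱼ cⱼ B^j A^(s-j) P_k Q_i` telescopes and vanishes as soon as the `cⱼ` satisfy a two-term
recurrence. The `b_j` are the coefficients `C(s + α, j) C(s + β, s - j)` of the Jacobi polynomial
(`α = k + (p-2)/2`, `β = i + (q-2)/2`, `C = Ring.choose`), for which this recurrence is
`C(a, j+1) (j+1) = C(a, j) (a - j)`.
Modulo `r² = A + B` we have `B ≡ -A`, so `H ≡ λ (-1)^s (∑ⱼ bⱼ) A^s P_k Q_i`, and by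
Chu–Vandermonde `∑ⱼ bⱼ = C(2s + α + β, s)`, which is exactly `λ⁻¹ (-1)^s`.
-/

section Choose

variable {K : Type*} [Field K] [CharZero K]

theorem Ring.choose_eq_prod_range_div (a : K) (n : ℕ) :
    Ring.choose a n = (∏ t ∈ range n, (a - t)) / n.factorial := by
  rw [Ring.choose_eq_smul, ← Polynomial.aeval_eq_smeval, Polynomial.aeval_def,
    Polynomial.eval₂_eq_eval_map, descPochhammer_map, descPochhammer_eval_eq_prod_range,
    smul_eq_mul, div_eq_inv_mul]

theorem Ring.choose_succ_mul_succ (a : K) (n : ℕ) :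
    Ring.choose a (n + 1) * (n + 1) = Ring.choose a n * (a - n) := by
  have : (n.factorial : K) ≠ 0 := Nat.cast_ne_zero.mpr n.factorial_ne_zero
  simp only [Ring.choose_eq_prod_range_div, prod_range_succ, Nat.factorial_succ]
  push_cast
  field_simp

theorem prod_range_sub_two_mul_div (x : K) (n : ℕ) :
    (∏ t ∈ range n, (x - 2 * t)) / (2 ^ n * n.factorial) = Ring.choose (x / 2) n := by
  have : ∏ t ∈ range n, (x - 2 * t) = 2 ^ n * ∏ t ∈ range n, (x / 2 - t) := by
    rw [← card_range n, ← prod_const, card_range, ← prod_mul_distrib]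
    exact prod_congr rfl fun t _ => by ring
  rw [this, Ring.choose_eq_prod_range_div, mul_div_mul_left _ _ (pow_ne_zero n two_ne_zero)]

theorem two_pow_mul_factorial_mul_choose_half (x : K) (n : ℕ) :
    2 ^ n * n.factorial * Ring.choose (x / 2) n = ∏ t ∈ range n, (x - 2 * n + 2 + 2 * t) := by
  have hne : (2 : K) ^ n * n.factorial ≠ 0 :=
    mul_ne_zero (pow_ne_zero n two_ne_zero) (Nat.cast_ne_zero.mpr n.factorial_ne_zero)
  rw [← prod_range_sub_two_mul_div, mul_div_cancel₀ _ hne,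
    ← prod_range_reflect]
  refine prod_congr rfl fun t ht => ?_
  rw [Nat.cast_sub (by simp at ht; omega), Nat.cast_sub (by simp at ht; omega)]
  push_cast
  ring

theorem Ring.sum_range_choose_mul_choose (a c : K) (s : ℕ) :
    ∑ j ∈ range (s + 1), Ring.choose a j * Ring.choose c (s - j) = Ring.choose (a + c) s := by
  rw [Ring.add_choose_eq s (Commute.all a c),
    Nat.sum_antidiagonal_eq_sum_range_succ (fun i j => Ring.choose a i * Ring.choose c j)]

end Choose

section JacobiCoefficients

variable {K : Type*} [Field K] [CharZero K] (d n e n' : K)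

theorem neg_one_pow_mul_choose_mul_choose_recurrence {s j : ℕ} (hj : j < s) :
    (-1) ^ (s - j) * (Ring.choose ((2 * d + n - 2 + 2 * s) / 2) j *
        Ring.choose ((2 * e + n' - 2 + 2 * s) / 2) (s - j)) *
        (2 * (s - j : ℕ) * (2 * (s - j : ℕ) + 2 * d + n - 2)) +
      (-1) ^ (s - (j + 1)) * (Ring.choose ((2 * d + n - 2 + 2 * s) / 2) (j + 1) *
        Ring.choose ((2 * e + n' - 2 + 2 * s) / 2) (s - (j + 1))) *
        (2 * (j + 1 : ℕ) * (2 * (j + 1 : ℕ) + 2 * e + n' - 2)) = 0 := by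
  obtain ⟨r, rfl⟩ : ∃ r, s = j + r + 1 := ⟨s - j - 1, by omega⟩
  set a := (2 * d + n - 2 + 2 * ((j + r + 1 : ℕ) : K)) / 2
  set c := (2 * e + n' - 2 + 2 * ((j + r + 1 : ℕ) : K)) / 2
  rw [show j + r + 1 - j = r + 1 by omega, show j + r + 1 - (j + 1) = r by omega]
  have ha : 2 * ((r + 1 : ℕ) : K) + 2 * d + n - 2 = 2 * (a - j) := by
    simp only [a]; push_cast; ring
  have hc : 2 * ((j + 1 : ℕ) : K) + 2 * e + n' - 2 = 2 * (c - r) := by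
    simp only [c]; push_cast; ring
  rw [ha, hc]
  push_cast
  linear_combination 4 * (-1) ^ r * Ring.choose c r * (c - r) * Ring.choose_succ_mul_succ a j -
    4 * (-1) ^ r * Ring.choose a j * (a - j) * Ring.choose_succ_mul_succ c r

theorem neg_one_pow_div_prod_mul_sum_choose_mul_choose (s : ℕ)
    (hD : ∏ t ∈ range s, (2 * (s : K) + 2 * d + 2 * e + n + n' - 2 + 2 * t) ≠ 0) :
    ((-1) ^ s * 2 ^ s * (s.factorial : K) /
        ∏ t ∈ range s, (2 * (s : K) + 2 * d + 2 * e + n + n' - 2 + 2 * t)) *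
      ((-1) ^ s * ∑ j ∈ range (s + 1), Ring.choose ((2 * d + n - 2 + 2 * s) / 2) j *
        Ring.choose ((2 * e + n' - 2 + 2 * s) / 2) (s - j)) = 1 := by
  have hprod : 2 ^ s * s.factorial * Ring.choose
      ((2 * d + n - 2 + 2 * s) / 2 + (2 * e + n' - 2 + 2 * s) / 2) s =
        ∏ t ∈ range s, (2 * (s : K) + 2 * d + 2 * e + n + n' - 2 + 2 * t) := by
    rw [← add_div, two_pow_mul_factorial_mul_choose_half]
    exact prod_congr rfl fun t _ => by ring
  have hsq : ((-1) ^ s * (-1) ^ s : K) = 1 := by rw [← mul_pow]; norm_num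
  rw [Ring.sum_range_choose_mul_choose, ← hprod, div_mul_eq_mul_div,
    div_eq_one_iff_eq (hprod ▸ hD)]
  linear_combination 2 ^ s * s.factorial * Ring.choose
    ((2 * d + n - 2 + 2 * s) / 2 + (2 * e + n' - 2 + 2 * s) / 2) s * hsq

end JacobiCoefficients

theorem Finset.sum_range_succ_smul_add_smul_eq_zero {R M : Type*} [Semiring R] [AddCommMonoid M]
    [Module R M] {s : ℕ} (f g : ℕ → R) (A B : ℕ → M) (hf : f s = 0) (hg : g 0 = 0)
    (hBA : ∀ j < s, B (j + 1) = A j) (hfg : ∀ j < s, f j + g (j + 1) = 0) :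
    ∑ j ∈ range (s + 1), (f j • A j + g j • B j) = 0 := by
  rw [sum_add_distrib, sum_range_succ, sum_range_succ', hf, hg, zero_smul, zero_smul, add_zero,
    add_zero, ← sum_add_distrib]
  exact sum_eq_zero fun j hj => by
    rw [hBA j (mem_range.mp hj), ← add_smul, hfg j (mem_range.mp hj), zero_smul]

theorem MvPolynomial.pderiv_eq_zero_of_mem_supported {σ R : Type*} [CommSemiring R] {S : Set σ}
    {F : MvPolynomial σ R} (hF : F ∈ supported R S) {i : σ} (hi : i ∉ S) : pderiv i F = 0 :=
  pderiv_eq_zero_of_notMem_vars fun hv => hi (mem_supported.mp hF hv)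

section Laplacian

variable {m : ℕ} {S T : Finset (Fin m)} {P Q : MvPolynomial (Fin m) ℂ} {d e : ℕ}

theorem lap_smul (c : ℂ) (F : MvPolynomial (Fin m) ℂ) : lap m (c • F) = c • lap m F := by
  simp [lap, smul_sum]

theorem lap_sum {ι : Type*} (S : Finset ι) (F : ι → MvPolynomial (Fin m) ℂ) :
    lap m (∑ j ∈ S, F j) = ∑ j ∈ S, lap m (F j) := by
  simp only [lap, map_sum]
  exact sum_comm

theorem lap_mul (F G : MvPolynomial (Fin m) ℂ) :
    lap m (F * G) = lap m F * G + 2 * ∑ i, pderiv i F * pderiv i G + F * lap m G := by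
  rw [lap, lap, lap, mul_sum, sum_mul, mul_sum, ← sum_add_distrib, ← sum_add_distrib]
  exact sum_congr rfl fun i _ => by simp only [pderiv_mul, map_add]; ring

theorem lap_mul_of_disjoint (hST : Disjoint S T)
    {F G : MvPolynomial (Fin m) ℂ} (hF : F ∈ supported ℂ (S : Set (Fin m)))
    (hG : G ∈ supported ℂ (T : Set (Fin m))) :
    lap m (F * G) = lap m F * G + F * lap m G := by
  have hFG (i : Fin m) : pderiv i F * pderiv i G = 0 := by
    by_cases hi : i ∈ S
    · rw [pderiv_eq_zero_of_mem_supported hG (by simpa using disjoint_left.mp hST hi), mul_zero]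
    · rw [pderiv_eq_zero_of_mem_supported hF (by simpa using hi), zero_mul]
  simp [lap_mul, hFG]

def sqNorm (S : Finset (Fin m)) : MvPolynomial (Fin m) ℂ := ∑ i ∈ S, X i ^ 2

theorem pderiv_sqNorm (S : Finset (Fin m)) (j : Fin m) :
    pderiv j (sqNorm S) = if j ∈ S then 2 * X j else 0 := by
  classical
  simp [sqNorm, pderiv_X, Pi.single_apply, mul_comm]

theorem sqNorm_mem_supported (S : Finset (Fin m)) :
    sqNorm S ∈ supported ℂ (S : Set (Fin m)) :=
  Subalgebra.sum_mem _ fun _ hi => pow_mem (X_mem_supported.mpr hi) 2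

theorem isHomogeneous_sqNorm (S : Finset (Fin m)) : (sqNorm S).IsHomogeneous 2 :=
  IsHomogeneous.sum _ _ _ fun i _ => by simpa using (isHomogeneous_X ℂ i).pow 2

theorem lap_sqNorm (S : Finset (Fin m)) : lap m (sqNorm S) = 2 * #S := by
  classical
  have h2 (j : Fin m) : pderiv j (2 : MvPolynomial (Fin m) ℂ) = 0 := by
    simpa using (pderiv j).map_natCast 2
  simp [lap, pderiv_sqNorm, apply_ite (pderiv _), sum_ite_mem, h2, mul_comm]

theorem lap_sqNorm_mul (hP : P ∈ supported ℂ (S : Set (Fin m))) (hPd : P.IsHomogeneous d) :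
    lap m (sqNorm S * P) = (2 * #S + 4 * d : ℂ) • P + sqNorm S * lap m P := by
  have hcross (i : Fin m) : pderiv i (sqNorm S) * pderiv i P = 2 * (X i * pderiv i P) := by
    rw [pderiv_sqNorm]
    split_ifs with hi
    · ring
    · rw [pderiv_eq_zero_of_mem_supported hP (by simpa using hi), zero_mul, mul_zero, mul_zero]
  rw [lap_mul, lap_sqNorm, sum_congr rfl fun i _ => hcross i, ← mul_sum, hPd.sum_X_mul_pderiv,
    smul_eq_C_mul, nsmul_eq_mul]
  simp only [map_add, map_mul, map_natCast, map_ofNat]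
  ring

-- At `a = 0` the coefficient vanishes, so the truncated exponent `a - 1` does no harm.
theorem lap_sqNorm_pow_mul (hP : P ∈ supported ℂ (S : Set (Fin m))) (hPh : lap m P = 0)
    (hPd : P.IsHomogeneous d) (a : ℕ) :
    lap m (sqNorm S ^ a * P) =
      (2 * a * (2 * a + 2 * d + #S - 2) : ℂ) • (sqNorm S ^ (a - 1) * P) := by
  induction a with
  | zero => simp [hPh]
  | succ a ih =>
    have hsupp : sqNorm S ^ a * P ∈ supported ℂ (S : Set (Fin m)) :=
      mul_mem (pow_mem (sqNorm_mem_supported S) a) hP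
    have hhom : (sqNorm S ^ a * P).IsHomogeneous (2 * a + d) := by
      simpa [mul_comm] using ((isHomogeneous_sqNorm S).pow a).mul hPd
    rw [pow_succ', mul_assoc, lap_sqNorm_mul hsupp hhom, ih]
    rcases a with _ | a
    · simp only [Nat.cast_zero, mul_zero, zero_mul, zero_smul, add_zero, zero_add]
      congr 1
      push_cast
      ring
    · rw [mul_smul_comm, ← mul_assoc, ← pow_succ', Nat.add_sub_cancel, ← add_smul]
      congr 1
      push_cast
      ring

theorem lap_sqNorm_pow_mul_mul_sqNorm_pow_mul (hST : Disjoint S T)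
    (hP : P ∈ supported ℂ (S : Set (Fin m))) (hPh : lap m P = 0) (hPd : P.IsHomogeneous d)
    (hQ : Q ∈ supported ℂ (T : Set (Fin m))) (hQh : lap m Q = 0) (hQe : Q.IsHomogeneous e)
    (a b : ℕ) :
    lap m (sqNorm S ^ a * P * (sqNorm T ^ b * Q)) =
      (2 * a * (2 * a + 2 * d + #S - 2) : ℂ) • (sqNorm S ^ (a - 1) * P * (sqNorm T ^ b * Q)) +
        (2 * b * (2 * b + 2 * e + #T - 2) : ℂ) •
          (sqNorm S ^ a * P * (sqNorm T ^ (b - 1) * Q)) := by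
  rw [lap_mul_of_disjoint hST (mul_mem (pow_mem (sqNorm_mem_supported S) a) hP)
      (mul_mem (pow_mem (sqNorm_mem_supported T) b) hQ),
    lap_sqNorm_pow_mul hP hPh hPd, lap_sqNorm_pow_mul hQ hQh hQe, smul_mul_assoc, mul_smul_comm]

theorem lap_sum_sqNorm_pow_mul_eq_zero (hST : Disjoint S T)
    (hP : P ∈ supported ℂ (S : Set (Fin m))) (hPh : lap m P = 0) (hPd : P.IsHomogeneous d)
    (hQ : Q ∈ supported ℂ (T : Set (Fin m))) (hQh : lap m Q = 0) (hQe : Q.IsHomogeneous e)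
    (s : ℕ) (c : ℕ → ℂ)
    (hc : ∀ j < s, c j * (2 * (s - j : ℕ) * (2 * (s - j : ℕ) + 2 * d + #S - 2)) +
      c (j + 1) * (2 * (j + 1 : ℕ) * (2 * (j + 1 : ℕ) + 2 * e + #T - 2)) = 0) :
    lap m (∑ j ∈ range (s + 1), c j • (sqNorm T ^ j * sqNorm S ^ (s - j) * P * Q)) = 0 := by
  have hterm (j : ℕ) : lap m (c j • (sqNorm T ^ j * sqNorm S ^ (s - j) * P * Q)) =
      (c j * (2 * (s - j : ℕ) * (2 * (s - j : ℕ) + 2 * d + #S - 2))) •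
          (sqNorm S ^ (s - j - 1) * P * (sqNorm T ^ j * Q)) +
        (c j * (2 * j * (2 * j + 2 * e + #T - 2))) •
          (sqNorm S ^ (s - j) * P * (sqNorm T ^ (j - 1) * Q)) := by
    rw [lap_smul, show sqNorm T ^ j * sqNorm S ^ (s - j) * P * Q =
        sqNorm S ^ (s - j) * P * (sqNorm T ^ j * Q) by ring,
      lap_sqNorm_pow_mul_mul_sqNorm_pow_mul hST hP hPh hPd hQ hQh hQe, smul_add, smul_smul,
      smul_smul, Nat.sub_sub]
  rw [lap_sum, sum_congr rfl fun j _ => hterm j]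
  refine sum_range_succ_smul_add_smul_eq_zero _ _ _ _ (by simp) (by simp) (fun j _ => ?_) hc
  simp only [Nat.add_sub_cancel, Nat.sub_sub]

end Laplacian

theorem add_dvd_sub_sum_neg_one_pow_smul {K A : Type*} [CommRing K] [CommRing A] [Algebra K A]
    (x y z : A) (s : ℕ) (b : ℕ → K) :
    x + y ∣ ((-1) ^ s * ∑ j ∈ range (s + 1), b j) • (x ^ s * z) -
      ∑ j ∈ range (s + 1), ((-1) ^ (s - j) * b j) • (y ^ j * x ^ (s - j) * z) := by
  rw [mul_sum, sum_smul, ← sum_sub_distrib]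
  refine dvd_sum fun j hj => ?_
  obtain ⟨n, rfl⟩ : ∃ n, s = j + n := ⟨s - j, by simp at hj; omega⟩
  have hdvd : x + y ∣ (-x) ^ j - y ^ j := by
    rw [← neg_dvd, neg_add']
    exact sub_dvd_pow_sub_pow (-x) y j
  have hterm : ((-1) ^ (j + n) * b j) • (x ^ (j + n) * z) -
      ((-1) ^ (j + n - j) * b j) • (y ^ j * x ^ (j + n - j) * z) =
        algebraMap K A ((-1) ^ n * b j) * x ^ n * z * ((-x) ^ j - y ^ j) := by
    simp only [Nat.add_sub_cancel_left, Algebra.smul_def, map_mul, map_pow, map_neg, map_one]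
    ring
  rw [hterm]
  exact hdvd.mul_left _

theorem r2_eq_u2_add_v2 (p q : ℕ) : r2 (p + q) = u2 p q + v2 p q := by
  rw [r2, u2, v2, ← sum_filter_add_sum_filter_not univ (fun i : Fin (p + q) => (i : ℕ) < p)]
  simp only [not_lt]

theorem card_filter_val_lt_add (p q : ℕ) : #{i : Fin (p + q) | (i : ℕ) < p} = p := by
  simp [Fin.card_filter_val_lt]

theorem card_filter_le_val_add (p q : ℕ) : #{i : Fin (p + q) | p ≤ (i : ℕ)} = q := by
  have := card_filter_add_card_filter_not (s := univ) (fun i : Fin (p + q) => (i : ℕ) < p)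
  simp_all [Fin.card_filter_val_lt]

theorem prod_two_mul_add_sub_two_ne_zero (s d e n n' : ℕ) (h : 0 < n + n') :
    ∏ t ∈ range s, (2 * (s : ℂ) + 2 * d + 2 * e + n + n' - 2 + 2 * t) ≠ 0 := by
  refine prod_ne_zero_iff.mpr fun t ht => ?_
  have hs : 1 ≤ s := by simp at ht; omega
  have hcast : 2 * (s : ℂ) + 2 * d + 2 * e + n + n' - 2 + 2 * t =
      ((2 * (s - 1) + 2 * d + 2 * e + n + n' + 2 * t : ℕ) : ℂ) := by
    push_cast [Nat.cast_sub hs]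
    ring
  rw [hcast, Nat.cast_ne_zero]
  omega

theorem stmt9_general (p q s k i : ℕ) (hp : 1 ≤ p)
    (Pk Qi : MvPolynomial (Fin (p + q)) ℂ)
    (hPk_supp : Pk ∈ MvPolynomial.supported ℂ {j : Fin (p + q) | (j : ℕ) < p})
    (hPk_harm : lap (p + q) Pk = 0) (hPk_hom : Pk.IsHomogeneous k)
    (hQi_supp : Qi ∈ MvPolynomial.supported ℂ {j : Fin (p + q) | p ≤ (j : ℕ)})
    (hQi_harm : lap (p + q) Qi = 0) (hQi_hom : Qi.IsHomogeneous i)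
    (lam : ℂ)
    (hlam : lam = (-1) ^ s * 2 ^ s * (Nat.factorial s : ℂ) /
      ∏ t ∈ range s,
        (2 * (s : ℂ) + 2 * (k : ℂ) + 2 * (i : ℂ) + (p : ℂ) + (q : ℂ) - 2 + 2 * (t : ℂ)))
    (b : ℕ → ℂ)
    (hb : ∀ j, b j =
      (∏ t ∈ range j, (2 * (k : ℂ) + (p : ℂ) - 2 + 2 * (s : ℂ) - 2 * (t : ℂ))) /
          (2 ^ j * (Nat.factorial j : ℂ)) *
        ((∏ t ∈ range (s - j), (2 * (i : ℂ) + (q : ℂ) - 2 + 2 * (s : ℂ) - 2 * (t : ℂ))) /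
          (2 ^ (s - j) * (Nat.factorial (s - j) : ℂ))))
    (H : MvPolynomial (Fin (p + q)) ℂ)
    (hH : H = lam • ∑ j ∈ range (s + 1),
      ((-1 : ℂ) ^ (s - j) * b j) • (v2 p q ^ j * u2 p q ^ (s - j) * Pk * Qi)) :
    lap (p + q) H = 0 ∧ ∃ R, u2 p q ^ s * Pk * Qi - H = r2 (p + q) * R := by
  have hb_choose (j : ℕ) : b j = Ring.choose ((2 * k + p - 2 + 2 * s : ℂ) / 2) j *
      Ring.choose ((2 * i + q - 2 + 2 * s : ℂ) / 2) (s - j) := by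
    rw [hb, prod_range_sub_two_mul_div, prod_range_sub_two_mul_div]
  constructor
  · have hUV : Disjoint ({j | (j : ℕ) < p} : Finset (Fin (p + q)))
        ({j | p ≤ (j : ℕ)} : Finset (Fin (p + q))) :=
      disjoint_filter.mpr fun _ _ h => not_le.mpr h
    have hsum : lap (p + q) (∑ j ∈ range (s + 1),
        ((-1 : ℂ) ^ (s - j) * b j) • (v2 p q ^ j * u2 p q ^ (s - j) * Pk * Qi)) = 0 :=
      lap_sum_sqNorm_pow_mul_eq_zero hUV (by simpa using hPk_supp) hPk_harm hPk_hom
        (by simpa using hQi_supp) hQi_harm hQi_hom s _ fun j hj => by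
          rw [hb_choose, hb_choose, card_filter_val_lt_add, card_filter_le_val_add]
          exact neg_one_pow_mul_choose_mul_choose_recurrence _ _ _ _ hj
    rw [hH, lap_smul, hsum, smul_zero]
  · have hnorm : lam * ((-1) ^ s * ∑ j ∈ range (s + 1), b j) = 1 := by
      rw [hlam, sum_congr rfl fun j _ => hb_choose j]
      exact neg_one_pow_div_prod_mul_sum_choose_mul_choose _ _ _ _ s
        (prod_two_mul_add_sub_two_ne_zero s k i p q (by omega))
    obtain ⟨R, hR⟩ := add_dvd_sub_sum_neg_one_pow_smul (u2 p q) (v2 p q) (Pk * Qi) s b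
    refine ⟨lam • R, ?_⟩
    rw [r2_eq_u2_add_v2, mul_smul_comm, ← hR, smul_sub, smul_smul, hnorm, one_smul, hH]
    simp only [mul_assoc]

theorem stmt9 (p q s k i : ℕ) (hp : 1 ≤ p) (hq : 1 ≤ q)
    (Pk Qi : MvPolynomial (Fin (p + q)) ℂ)
    (hPk_supp : Pk ∈ MvPolynomial.supported ℂ {j : Fin (p + q) | (j : ℕ) < p})
    (hPk_harm : lap (p + q) Pk = 0) (hPk_hom : Pk.IsHomogeneous k)
    (hQi_supp : Qi ∈ MvPolynomial.supported ℂ {j : Fin (p + q) | p ≤ (j : ℕ)})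
    (hQi_harm : lap (p + q) Qi = 0) (hQi_hom : Qi.IsHomogeneous i)
    (lam : ℂ)
    (hlam : lam = (-1) ^ s * 2 ^ s * (Nat.factorial s : ℂ) /
      ∏ t ∈ range s,
        (2 * (s : ℂ) + 2 * (k : ℂ) + 2 * (i : ℂ) + (p : ℂ) + (q : ℂ) - 2 + 2 * (t : ℂ)))
    (b : ℕ → ℂ)
    (hb : ∀ j, b j =
      (∏ t ∈ range j, (2 * (k : ℂ) + (p : ℂ) - 2 + 2 * (s : ℂ) - 2 * (t : ℂ))) /
          (2 ^ j * (Nat.factorial j : ℂ)) *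
        ((∏ t ∈ range (s - j), (2 * (i : ℂ) + (q : ℂ) - 2 + 2 * (s : ℂ) - 2 * (t : ℂ))) /
          (2 ^ (s - j) * (Nat.factorial (s - j) : ℂ))))
    (H : MvPolynomial (Fin (p + q)) ℂ)
    (hH : H = lam • ∑ j ∈ range (s + 1),
      ((-1 : ℂ) ^ (s - j) * b j) • (v2 p q ^ j * u2 p q ^ (s - j) * Pk * Qi)) :
    lap (p + q) H = 0 ∧ ∃ R, u2 p q ^ s * Pk * Qi - H = r2 (p + q) * R :=
  stmt9_general p q s k i hp Pk Qi hPk_supp hPk_harm hPk_hom hQi_supp hQi_harm hQi_hom lam hlam b hb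
    H hH

end
end

section
/- (Fischer norm of the projected elements.) Let m = p + q with p, q ≥ 1, s, k, i ∈ ℕ, let P_k be a harmonic polynomial in the u-variables homogeneous of degree k and Q_i a harmonic polynomial in the v-variables homogeneous of degree i. Let H be a harmonic polynomial (in all m variables) with |u|^{2s}·P_k·Q_i - H = r²·R for some polynomial R. Then ⟨H, H⟩ = c · ⟨P_k, P_k⟩ · ⟨Q_i, Q_i⟩ with c := 2^s · s! · ∏_{t=0}^{s-1} ((2k + p + 2t)(2i + q + 2t)/(2s + 2k + 2i + m - 2 + 2t)), where ⟨·,·⟩ is the Fischer inner product. -/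
open MvPolynomial Finset

noncomputable section

/-!
Multiplication by `X j` is adjoint to `∂ⱼ` for the Fischer product, so multiplication by `r²` is
adjoint to `Δ`. Hence a harmonic polynomial divisible by `r²` vanishes, the harmonic `H` with
`H ≡ F` modulo `r²` is unique, and `⟨H, H⟩ = ⟨F, H⟩`.

For `F = |u|^{2s} P Q` put `e a b = |u|^{2a} |v|^{2b} P Q` (`radialTerm`). Euler's identity gives
`Δ_u e (a+1) b = μ_a e a b` and `Δ_v e a (b+1) = ν_b e a b`, so `∑ⱼ cⱼ e (s-j) j` is harmonic as
soon as `cⱼ μ_{s-1-j} + c_{j+1} ν_j = 0`, and it is congruent to `(∑ⱼ (-1)^j cⱼ) F` modulo `r²`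
since `|v|² ≡ -|u|²`. For the solution of the recurrence, the normalisation `∑ⱼ (-1)^j cⱼ = 1` is
the Chu–Vandermonde identity. Finally `⟨F, e (s-j) j⟩ = ⟨P Q, Δ_u^s e (s-j) j⟩` vanishes for
`j > 0`, so `⟨H, H⟩ = c₀ ∏_{t<s} μ_t ⟨P, P⟩ ⟨Q, Q⟩`, and `⟨P Q, P Q⟩ = ⟨P, P⟩ ⟨Q, Q⟩` because
`P` and `Q` involve disjoint sets of variables.
-/

namespace MvPolynomial

section PartialLaplacian

variable {σ R : Type*} [CommRing R]

def lapOn (S : Finset σ) (F : MvPolynomial σ R) : MvPolynomial σ R :=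
  ∑ i ∈ S, pderiv i (pderiv i F)

def sqNormOn (S : Finset σ) : MvPolynomial σ R :=
  ∑ i ∈ S, X i ^ 2

variable {S : Finset σ} {T : Set σ} {F : MvPolynomial σ R}

lemma pderiv_eq_zero_of_mem_supported_s10 (hF : F ∈ supported R T) {j : σ} (hj : j ∉ T) :
    pderiv j F = 0 :=
  pderiv_eq_zero_of_notMem_vars fun hv => hj (mem_supported.mp hF hv)

lemma lapOn_smul (c : R) (F : MvPolynomial σ R) : lapOn S (c • F) = c • lapOn S F := by
  simp only [lapOn, Derivation.map_smul, smul_sum]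

lemma lapOn_sum {ι : Type*} (I : Finset ι) (f : ι → MvPolynomial σ R) :
    lapOn S (∑ j ∈ I, f j) = ∑ j ∈ I, lapOn S (f j) := by
  simp only [lapOn, map_sum]
  exact sum_comm

lemma lapOn_sub (F G : MvPolynomial σ R) : lapOn S (F - G) = lapOn S F - lapOn S G := by
  simp only [lapOn, map_sub, sum_sub_distrib]

lemma lapOn_add_lapOn_compl [Fintype σ] [DecidableEq σ] (F : MvPolynomial σ R) :
    lapOn S F + lapOn Sᶜ F = lapOn univ F :=
  sum_add_sum_compl S _

lemma sqNormOn_add_sqNormOn_compl [Fintype σ] [DecidableEq σ] :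
    sqNormOn S + sqNormOn Sᶜ = (sqNormOn univ : MvPolynomial σ R) :=
  sum_add_sum_compl S _

lemma lapOn_eq_zero_of_mem_supported (hF : F ∈ supported R T) (hST : Disjoint (S : Set σ) T) :
    lapOn S F = 0 :=
  sum_eq_zero fun j hj => by
    rw [pderiv_eq_zero_of_mem_supported_s10 hF (hST.notMem_of_mem_left hj), map_zero]

lemma lapOn_eq_lapOn_univ_of_mem_supported [Fintype σ] [DecidableEq σ]
    (hF : F ∈ supported R (S : Set σ)) : lapOn S F = lapOn univ F := by
  rw [← lapOn_add_lapOn_compl (S := S),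
    lapOn_eq_zero_of_mem_supported hF (disjoint_coe.mpr disjoint_compl_left), add_zero]

lemma lapOn_mul_of_mem_supported (hF : F ∈ supported R T) (hST : Disjoint (S : Set σ) T)
    (G : MvPolynomial σ R) : lapOn S (F * G) = F * lapOn S G := by
  rw [lapOn, lapOn, mul_sum]
  refine sum_congr rfl fun j hj => ?_
  have hFj := pderiv_eq_zero_of_mem_supported_s10 hF (hST.notMem_of_mem_left hj)
  simp only [pderiv_mul, hFj, zero_mul, zero_add]

lemma sqNormOn_mem_supported : (sqNormOn S : MvPolynomial σ R) ∈ supported R (S : Set σ) :=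
  Subalgebra.sum_mem _ fun j hj => Subalgebra.pow_mem _
    (supported_eq_adjoin_X (R := R) (S : Set σ) ▸ Algebra.subset_adjoin ⟨j, hj, rfl⟩) 2

lemma isHomogeneous_sqNormOn : (sqNormOn S : MvPolynomial σ R).IsHomogeneous 2 :=
  IsHomogeneous.sum _ _ 2 fun j _ => isHomogeneous_X_pow j 2

lemma pderiv_sqNormOn [DecidableEq σ] {j : σ} (hj : j ∈ S) :
    pderiv j (sqNormOn S : MvPolynomial σ R) = 2 * X j := by
  rw [sqNormOn, map_sum, sum_eq_single_of_mem j hj fun i _ hij => by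
    rw [pderiv_pow, pderiv_X_of_ne hij, mul_zero]]
  rw [pderiv_pow, pderiv_X_self]
  norm_num

lemma sum_X_mul_pderiv_of_mem_supported [Fintype σ] {n : ℕ} (hF : F ∈ supported R (S : Set σ))
    (hFn : F.IsHomogeneous n) : ∑ i ∈ S, X i * pderiv i F = n • F := by
  rw [← hFn.sum_X_mul_pderiv]
  exact sum_subset (subset_univ S) fun j _ hj => by
    rw [pderiv_eq_zero_of_mem_supported_s10 hF (by simpa using hj), mul_zero]

lemma lapOn_sqNormOn_mul [Fintype σ] {n : ℕ} (hF : F ∈ supported R (S : Set σ))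
    (hFn : F.IsHomogeneous n) :
    lapOn S (sqNormOn S * F) = (2 * #S + 4 * n) • F + sqNormOn S * lapOn S F := by
  classical
  have hj : ∀ j ∈ S, pderiv j (pderiv j (sqNormOn S * F)) =
      2 * F + 4 * (X j * pderiv j F) + sqNormOn S * pderiv j (pderiv j F) := fun j hj => by
    simp only [pderiv_mul, pderiv_sqNormOn hj, two_mul, map_add, pderiv_X_self]
    ring
  rw [lapOn, sum_congr rfl hj, sum_add_distrib, sum_add_distrib, ← mul_sum, ← mul_sum, ← mul_sum,
    sum_X_mul_pderiv_of_mem_supported hF hFn, sum_const, lapOn]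
  simp only [nsmul_eq_mul]
  push_cast
  ring

end PartialLaplacian

section RadialTerm

variable {σ R : Type*} [CommRing R]

def radialCoeff (n k a : ℕ) : ℕ := 2 * (a + 1) * (n + 2 * k + 2 * a)

lemma sqNormOn_pow_mul_mem_supported {S : Finset σ} {F : MvPolynomial σ R}
    (hF : F ∈ supported R (S : Set σ)) (a : ℕ) : sqNormOn S ^ a * F ∈ supported R (S : Set σ) :=
  Subalgebra.mul_mem _ (Subalgebra.pow_mem _ sqNormOn_mem_supported a) hF

lemma lapOn_sqNormOn_pow_mul [Fintype σ] {S : Finset σ} {F : MvPolynomial σ R} {k : ℕ}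
    (hF : F ∈ supported R (S : Set σ)) (hFk : F.IsHomogeneous k) (hF0 : lapOn S F = 0) (a : ℕ) :
    lapOn S (sqNormOn S ^ (a + 1) * F) = radialCoeff #S k a • (sqNormOn S ^ a * F) := by
  induction a with
  | zero =>
    rw [zero_add, pow_one, lapOn_sqNormOn_mul hF hFk, hF0, mul_zero, add_zero, pow_zero, one_mul,
      radialCoeff]
    ring_nf
  | succ a ih =>
    rw [pow_succ', mul_assoc, lapOn_sqNormOn_mul (sqNormOn_pow_mul_mem_supported hF _)
      ((isHomogeneous_sqNormOn.pow _).mul hFk), ih, mul_smul_comm, ← mul_assoc, ← pow_succ',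
      ← add_smul, radialCoeff, radialCoeff]
    congr 1
    ring

variable [Fintype σ] [DecidableEq σ] (S : Finset σ) (P Q : MvPolynomial σ R)

def radialTerm (a b : ℕ) : MvPolynomial σ R := sqNormOn S ^ a * P * (sqNormOn Sᶜ ^ b * Q)

lemma radialTerm_compl (a b : ℕ) : radialTerm Sᶜ Q P b a = radialTerm S P Q a b := by
  rw [radialTerm, radialTerm, compl_compl, mul_comm]

lemma radialTerm_succ_zero (a : ℕ) :
    radialTerm S P Q (a + 1) 0 = sqNormOn S * radialTerm S P Q a 0 := by
  rw [radialTerm, radialTerm, pow_succ']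
  ring

variable {S P Q}

lemma lapOn_radialTerm_eq_sqNormOn_compl_pow_mul (hQ : Q ∈ supported R (↑Sᶜ : Set σ))
    (a b : ℕ) : lapOn S (radialTerm S P Q a b) =
      sqNormOn Sᶜ ^ b * Q * lapOn S (sqNormOn S ^ a * P) := by
  rw [radialTerm, mul_comm, lapOn_mul_of_mem_supported (sqNormOn_pow_mul_mem_supported hQ b)
    (disjoint_coe.mpr disjoint_compl_right)]

lemma lapOn_radialTerm_zero_left (hP0 : lapOn S P = 0) (hQ : Q ∈ supported R (↑Sᶜ : Set σ))
    (b : ℕ) : lapOn S (radialTerm S P Q 0 b) = 0 := by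
  rw [lapOn_radialTerm_eq_sqNormOn_compl_pow_mul hQ, pow_zero, one_mul, hP0, mul_zero]

lemma lapOn_radialTerm_succ_left {k : ℕ} (hP : P ∈ supported R (S : Set σ))
    (hPk : P.IsHomogeneous k) (hP0 : lapOn S P = 0) (hQ : Q ∈ supported R (↑Sᶜ : Set σ))
    (a b : ℕ) :
    lapOn S (radialTerm S P Q (a + 1) b) = radialCoeff #S k a • radialTerm S P Q a b := by
  rw [lapOn_radialTerm_eq_sqNormOn_compl_pow_mul hQ, lapOn_sqNormOn_pow_mul hP hPk hP0,
    mul_smul_comm, mul_comm, radialTerm]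

lemma lapOn_compl_radialTerm_zero_right (hQ0 : lapOn Sᶜ Q = 0) (hP : P ∈ supported R (S : Set σ))
    (a : ℕ) : lapOn Sᶜ (radialTerm S P Q a 0) = 0 := by
  rw [← radialTerm_compl]
  exact lapOn_radialTerm_zero_left hQ0 (by rwa [compl_compl]) a

lemma lapOn_compl_radialTerm_succ_right {i : ℕ} (hQ : Q ∈ supported R (↑Sᶜ : Set σ))
    (hQi : Q.IsHomogeneous i) (hQ0 : lapOn Sᶜ Q = 0) (hP : P ∈ supported R (S : Set σ))
    (a b : ℕ) :
    lapOn Sᶜ (radialTerm S P Q a (b + 1)) = radialCoeff #Sᶜ i b • radialTerm S P Q a b := by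
  rw [← radialTerm_compl S P Q a (b + 1), ← radialTerm_compl S P Q a b]
  exact lapOn_radialTerm_succ_left hQ hQi hQ0 (by rwa [compl_compl]) b a

lemma lapOn_univ_sum_smul_radialTerm_eq_zero {k i s : ℕ} (hP : P ∈ supported R (S : Set σ))
    (hPk : P.IsHomogeneous k) (hP0 : lapOn S P = 0) (hQ : Q ∈ supported R (↑Sᶜ : Set σ))
    (hQi : Q.IsHomogeneous i) (hQ0 : lapOn Sᶜ Q = 0) (c : ℕ → R)
    (hc : ∀ j < s, c j * radialCoeff #S k (s - 1 - j) + c (j + 1) * radialCoeff #Sᶜ i j = 0) :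
    lapOn univ (∑ j ∈ range (s + 1), c j • radialTerm S P Q (s - j) j) = 0 := by
  have hS : ∑ j ∈ range (s + 1), lapOn S (c j • radialTerm S P Q (s - j) j) =
      ∑ j ∈ range s, (c j * radialCoeff #S k (s - 1 - j)) • radialTerm S P Q (s - 1 - j) j := by
    rw [sum_range_succ, Nat.sub_self, lapOn_smul, lapOn_radialTerm_zero_left hP0 hQ, smul_zero,
      add_zero]
    refine sum_congr rfl fun j hj => ?_
    rw [show s - j = s - 1 - j + 1 by grind, lapOn_smul, lapOn_radialTerm_succ_left hP hPk hP0 hQ,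
      ← Nat.cast_smul_eq_nsmul R, smul_smul]
  have hSc : ∑ j ∈ range (s + 1), lapOn Sᶜ (c j • radialTerm S P Q (s - j) j) =
      ∑ j ∈ range s, (c (j + 1) * radialCoeff #Sᶜ i j) • radialTerm S P Q (s - 1 - j) j := by
    rw [sum_range_succ', Nat.sub_zero, lapOn_smul, lapOn_compl_radialTerm_zero_right hQ0 hP,
      smul_zero, add_zero]
    refine sum_congr rfl fun j hj => ?_
    rw [show s - (j + 1) = s - 1 - j by omega, lapOn_smul,
      lapOn_compl_radialTerm_succ_right hQ hQi hQ0 hP, ← Nat.cast_smul_eq_nsmul R, smul_smul]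
  rw [← lapOn_add_lapOn_compl, lapOn_sum, lapOn_sum, hS, hSc, ← sum_add_distrib]
  exact sum_eq_zero fun j hj => by rw [← add_smul, hc j (mem_range.mp hj), zero_smul]

lemma sqNormOn_univ_dvd_radialTerm_sub (a b : ℕ) :
    sqNormOn univ ∣ radialTerm S P Q a b - (-1) ^ b * radialTerm S P Q (a + b) 0 := by
  have h := sub_dvd_pow_sub_pow (sqNormOn Sᶜ) (-sqNormOn S : MvPolynomial σ R) b
  rw [sub_neg_eq_add, add_comm, sqNormOn_add_sqNormOn_compl] at h
  convert h.mul_left (sqNormOn S ^ a * P * Q) using 1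
  rw [neg_pow]
  simp only [radialTerm, pow_add, pow_zero]
  ring

lemma sqNormOn_univ_dvd_radialTerm_sub_sum {s : ℕ} (c : ℕ → R)
    (hc : ∑ j ∈ range (s + 1), (-1) ^ j * c j = 1) :
    sqNormOn univ ∣
      radialTerm S P Q s 0 - ∑ j ∈ range (s + 1), c j • radialTerm S P Q (s - j) j := by
  rw [← one_smul R (radialTerm S P Q s 0), ← hc, sum_smul, ← sum_sub_distrib]
  refine dvd_sum fun j hj => ?_
  have h := (sqNormOn_univ_dvd_radialTerm_sub (S := S) (P := P) (Q := Q) (s - j) j).mul_left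
    (C (c j))
  rw [Nat.sub_add_cancel (mem_range_succ_iff.mp hj)] at h
  convert h.neg_right using 1
  simp only [smul_eq_C_mul, C_mul, C_pow, C_neg, C_1]
  ring

end RadialTerm

end MvPolynomial

section Fischer

variable {m : ℕ}

lemma fischer_eq_sum_of_support_subset {P : MvPolynomial (Fin m) ℂ} (Q : MvPolynomial (Fin m) ℂ)
    {T : Finset (Fin m →₀ ℕ)} (hT : P.support ⊆ T) :
    fischer m P Q =
      ∑ α ∈ T, (∏ i, ((α i).factorial : ℂ)) * (starRingEnd ℂ) (coeff α P) * coeff α Q :=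
  sum_subset hT fun α _ hα => by rw [notMem_support_iff.mp hα, map_zero, mul_zero, zero_mul]

lemma fischer_add_left (P₁ P₂ Q : MvPolynomial (Fin m) ℂ) :
    fischer m (P₁ + P₂) Q = fischer m P₁ Q + fischer m P₂ Q := by
  classical
  rw [fischer_eq_sum_of_support_subset Q support_add,
    fischer_eq_sum_of_support_subset Q subset_union_left,
    fischer_eq_sum_of_support_subset Q subset_union_right, ← sum_add_distrib]
  refine sum_congr rfl fun α _ => ?_
  rw [coeff_add, map_add]
  ring

lemma fischer_smul_left (c : ℂ) (P Q : MvPolynomial (Fin m) ℂ) :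
    fischer m (c • P) Q = (starRingEnd ℂ) c * fischer m P Q := by
  rw [fischer_eq_sum_of_support_subset Q support_smul, fischer, mul_sum]
  refine sum_congr rfl fun α _ => ?_
  rw [coeff_smul, smul_eq_mul, map_mul]
  ring

lemma fischer_add_right (P Q₁ Q₂ : MvPolynomial (Fin m) ℂ) :
    fischer m P (Q₁ + Q₂) = fischer m P Q₁ + fischer m P Q₂ := by
  simp only [fischer, coeff_add, mul_add, sum_add_distrib]

lemma fischer_smul_right (c : ℂ) (P Q : MvPolynomial (Fin m) ℂ) :
    fischer m P (c • Q) = c * fischer m P Q := by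
  simp only [fischer, coeff_smul, smul_eq_mul, mul_sum]
  exact sum_congr rfl fun α _ => by ring

def fischerForm (m : ℕ) : MvPolynomial (Fin m) ℂ →ₗ⋆[ℂ] MvPolynomial (Fin m) ℂ →ₗ[ℂ] ℂ :=
  LinearMap.mk₂'ₛₗ _ _ (fischer m) fischer_add_left fischer_smul_left fischer_add_right
    fischer_smul_right

lemma fischer_sub_left (P₁ P₂ Q : MvPolynomial (Fin m) ℂ) :
    fischer m (P₁ - P₂) Q = fischer m P₁ Q - fischer m P₂ Q :=
  LinearMap.congr_fun (map_sub (fischerForm m) P₁ P₂) Q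

lemma fischer_sum_left {ι : Type*} (I : Finset ι) (f : ι → MvPolynomial (Fin m) ℂ)
    (Q : MvPolynomial (Fin m) ℂ) : fischer m (∑ j ∈ I, f j) Q = ∑ j ∈ I, fischer m (f j) Q :=
  (LinearMap.congr_fun (map_sum (fischerForm m) f I) Q).trans (LinearMap.sum_apply ..)

lemma fischer_sum_right {ι : Type*} (I : Finset ι) (P : MvPolynomial (Fin m) ℂ)
    (f : ι → MvPolynomial (Fin m) ℂ) : fischer m P (∑ j ∈ I, f j) = ∑ j ∈ I, fischer m P (f j) :=
  map_sum (fischerForm m P) f I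

lemma fischer_zero_right (P : MvPolynomial (Fin m) ℂ) : fischer m P 0 = 0 :=
  map_zero (fischerForm m P)

end Fischer

section FischerAdjoint

variable {m : ℕ}

lemma prod_factorial_add_single (β : Fin m →₀ ℕ) (j : Fin m) :
    ∏ i, (((β + Finsupp.single j 1 : Fin m →₀ ℕ) i).factorial : ℂ) =
      (β j + 1) * ∏ i, ((β i).factorial : ℂ) := by
  have hne : ∀ i ∈ ({j}ᶜ : Finset (Fin m)), (β + Finsupp.single j 1 : Fin m →₀ ℕ) i = β i :=
    fun i hi => by rw [Finsupp.add_apply, Finsupp.single_eq_of_ne (by simpa using hi), add_zero]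
  rw [Fintype.prod_eq_mul_prod_compl j, Fintype.prod_eq_mul_prod_compl j,
    prod_congr rfl fun i hi => by rw [hne i hi], Finsupp.add_apply, Finsupp.single_eq_same,
    Nat.factorial_succ]
  push_cast
  ring

lemma fischer_X_mul (j : Fin m) (P Q : MvPolynomial (Fin m) ℂ) :
    fischer m (X j * P) Q = fischer m P (pderiv j Q) := by
  rw [fischer, support_X_mul, sum_map, fischer]
  refine sum_congr rfl fun β _ => ?_
  rw [addLeftEmbedding_apply, coeff_X_mul, coeff_pderiv, add_comm _ β, prod_factorial_add_single]
  ring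

lemma fischer_sqNormOn_mul (S : Finset (Fin m)) (P Q : MvPolynomial (Fin m) ℂ) :
    fischer m (sqNormOn S * P) Q = fischer m P (lapOn S Q) := by
  rw [sqNormOn, sum_mul, fischer_sum_left, lapOn, fischer_sum_right]
  refine sum_congr rfl fun j _ => ?_
  rw [sq, mul_assoc, fischer_X_mul, fischer_X_mul]

lemma fischer_r2_mul (P Q : MvPolynomial (Fin m) ℂ) :
    fischer m (r2 m * P) Q = fischer m P (lap m Q) :=
  fischer_sqNormOn_mul univ P Q

lemma eq_zero_of_fischer_self_eq_zero {P : MvPolynomial (Fin m) ℂ} (h : fischer m P P = 0) :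
    P = 0 := by
  by_contra hP
  have hreal : fischer m P P =
      ((∑ α ∈ P.support, (∏ i, ((α i).factorial : ℝ)) * Complex.normSq (coeff α P) : ℝ) : ℂ) := by
    push_cast [Complex.normSq_eq_conj_mul_self]
    exact sum_congr rfl fun α _ => mul_assoc _ _ _
  have hpos : 0 < ∑ α ∈ P.support, (∏ i, ((α i).factorial : ℝ)) * Complex.normSq (coeff α P) :=
    sum_pos (fun α hα => mul_pos (prod_pos fun i _ => by positivity)
      (Complex.normSq_pos.mpr (mem_support_iff.mp hα))) (support_nonempty.mpr hP)
  rw [hreal, Complex.ofReal_eq_zero] at h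
  exact hpos.ne' h

end FischerAdjoint

section HarmonicProjection

variable {m : ℕ}

lemma eq_zero_of_lap_eq_zero_of_r2_dvd {H : MvPolynomial (Fin m) ℂ} (hH : lap m H = 0)
    (hdvd : r2 m ∣ H) : H = 0 := by
  obtain ⟨R, rfl⟩ := hdvd
  exact eq_zero_of_fischer_self_eq_zero (by rw [fischer_r2_mul, hH, fischer_zero_right])

def IsHarmonicProjection (m : ℕ) (F H : MvPolynomial (Fin m) ℂ) : Prop :=
  lap m H = 0 ∧ r2 m ∣ F - H

lemma IsHarmonicProjection.unique {F H₁ H₂ : MvPolynomial (Fin m) ℂ}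
    (h₁ : IsHarmonicProjection m F H₁) (h₂ : IsHarmonicProjection m F H₂) : H₁ = H₂ := by
  refine sub_eq_zero.mp (eq_zero_of_lap_eq_zero_of_r2_dvd ?_ ?_)
  · exact (lapOn_sub (S := univ) H₁ H₂).trans (by rw [sub_eq_zero]; exact h₁.1.trans h₂.1.symm)
  · simpa using dvd_sub h₂.2 h₁.2

lemma IsHarmonicProjection.fischer_self {F H : MvPolynomial (Fin m) ℂ}
    (h : IsHarmonicProjection m F H) : fischer m H H = fischer m F H := by
  obtain ⟨R, hR⟩ := h.2
  rw [eq_comm, ← sub_eq_zero, ← fischer_sub_left, hR, fischer_r2_mul, h.1, fischer_zero_right]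

end HarmonicProjection

section FischerProduct

lemma apply_eq_zero_of_mem_support_of_mem_supported {σ R : Type*} [CommSemiring R] {T : Set σ}
    {P : MvPolynomial σ R} (hP : P ∈ supported R T) {α : σ →₀ ℕ} (hα : α ∈ P.support) {j : σ}
    (hj : j ∉ T) : α j = 0 :=
  Finsupp.notMem_support_iff.mp fun hjα =>
    hj (mem_supported.mp hP ((mem_vars_iff_mem_support j).mpr ⟨α, hα, hjα⟩))

lemma Finsupp.eq_and_eq_of_add_eq_add {σ : Type*} {S : Finset σ} {x₁ x₂ y₁ y₂ : σ →₀ ℕ}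
    (hx₁ : ∀ j ∉ S, x₁ j = 0) (hy₁ : ∀ j ∉ S, y₁ j = 0) (hx₂ : ∀ j ∈ S, x₂ j = 0)
    (hy₂ : ∀ j ∈ S, y₂ j = 0) (h : x₁ + x₂ = y₁ + y₂) : x₁ = y₁ ∧ x₂ = y₂ := by
  refine ⟨Finsupp.ext fun j => ?_, Finsupp.ext fun j => ?_⟩ <;>
  · have hj' : x₁ j + x₂ j = y₁ j + y₂ j := DFunLike.congr_fun h j
    by_cases hj : j ∈ S
    · have := hx₂ j hj; have := hy₂ j hj; omega
    · have := hx₁ j hj; have := hy₁ j hj; omega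

variable {m : ℕ} {S : Finset (Fin m)} {P Q : MvPolynomial (Fin m) ℂ}

lemma fischer_mul_self_of_mem_supported (hP : P ∈ supported ℂ (S : Set (Fin m)))
    (hQ : Q ∈ supported ℂ (↑Sᶜ : Set (Fin m))) :
    fischer m (P * Q) (P * Q) = fischer m P P * fischer m Q Q := by
  classical
  have hPS : ∀ α ∈ P.support, ∀ j ∉ S, α j = 0 := fun α hα j hj =>
    apply_eq_zero_of_mem_support_of_mem_supported hP hα (by simpa using hj)
  have hQS : ∀ β ∈ Q.support, ∀ j ∈ S, β j = 0 := fun β hβ j hj =>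
    apply_eq_zero_of_mem_support_of_mem_supported hQ hβ (by simpa using hj)
  have hcoeff : ∀ α ∈ P.support, ∀ β ∈ Q.support,
      coeff (α + β) (P * Q) = coeff α P * coeff β Q := fun α hα β hβ => by
    rw [coeff_mul, sum_eq_single (α, β) ?_ (fun h => absurd (mem_antidiagonal.mpr rfl) h)]
    rintro ⟨α', β'⟩ hmem hne
    by_contra h0
    obtain ⟨hα', hβ'⟩ := mul_ne_zero_iff.mp h0
    exact hne (Prod.ext_iff.mpr (Finsupp.eq_and_eq_of_add_eq_add
      (hPS α' (mem_support_iff.mpr hα')) (hPS α hα) (hQS β' (mem_support_iff.mpr hβ'))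
      (hQS β hβ) (mem_antidiagonal.mp hmem)))
  have hweight : ∀ α ∈ P.support, ∀ β ∈ Q.support,
      ∏ i, (((α + β) i).factorial : ℂ) =
        (∏ i, ((α i).factorial : ℂ)) * ∏ i, ((β i).factorial : ℂ) :=
    fun α hα β hβ => by
      rw [← prod_mul_distrib]
      refine prod_congr rfl fun j _ => ?_
      by_cases hj : j ∈ S <;> simp [hPS α hα, hQS β hβ, hj]
  rw [fischer_eq_sum_of_support_subset _ ((support_mul P Q).trans_eq add_def), sum_image, fischer,
    fischer, sum_mul_sum, sum_product]
  · refine sum_congr rfl fun α hα => sum_congr rfl fun β hβ => ?_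
    rw [hcoeff α hα β hβ, hweight α hα β hβ, map_mul]
    ring
  · rintro ⟨α, β⟩ hαβ ⟨α', β'⟩ hαβ' h
    simp only [coe_product, Set.mem_prod, mem_coe] at hαβ hαβ'
    exact Prod.ext_iff.mpr (Finsupp.eq_and_eq_of_add_eq_add (hPS α hαβ.1) (hPS α' hαβ'.1)
      (hQS β hαβ.2) (hQS β' hαβ'.2) h)

end FischerProduct

section RadialFischer

variable {m k : ℕ} {S : Finset (Fin m)} {P Q : MvPolynomial (Fin m) ℂ}

lemma fischer_radialTerm_eq_zero_of_pos (hP : P ∈ supported ℂ (S : Set (Fin m)))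
    (hPk : P.IsHomogeneous k) (hP0 : lapOn S P = 0) (hQ : Q ∈ supported ℂ (↑Sᶜ : Set (Fin m)))
    (a : ℕ) {b : ℕ} (hb : 0 < b) :
    fischer m (radialTerm S P Q (a + b) 0) (radialTerm S P Q a b) = 0 := by
  induction a with
  | zero =>
    obtain ⟨b, rfl⟩ := Nat.exists_eq_add_of_lt hb
    rw [zero_add, zero_add, radialTerm_succ_zero, fischer_sqNormOn_mul,
      lapOn_radialTerm_zero_left hP0 hQ, fischer_zero_right]
  | succ a ih =>
    rw [add_right_comm, radialTerm_succ_zero, fischer_sqNormOn_mul,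
      lapOn_radialTerm_succ_left hP hPk hP0 hQ, ← Nat.cast_smul_eq_nsmul ℂ, fischer_smul_right,
      ih, mul_zero]

lemma fischer_radialTerm_self (hP : P ∈ supported ℂ (S : Set (Fin m)))
    (hPk : P.IsHomogeneous k) (hP0 : lapOn S P = 0) (hQ : Q ∈ supported ℂ (↑Sᶜ : Set (Fin m)))
    (a : ℕ) :
    fischer m (radialTerm S P Q a 0) (radialTerm S P Q a 0) =
      (∏ t ∈ range a, (radialCoeff #S k t : ℂ)) * fischer m P P * fischer m Q Q := by
  induction a with
  | zero =>
    rw [prod_range_zero, one_mul]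
    simpa [radialTerm] using fischer_mul_self_of_mem_supported hP hQ
  | succ a ih =>
    rw [radialTerm_succ_zero, fischer_sqNormOn_mul, ← radialTerm_succ_zero,
      lapOn_radialTerm_succ_left hP hPk hP0 hQ, ← Nat.cast_smul_eq_nsmul ℂ, fischer_smul_right,
      ih, prod_range_succ]
    ring

end RadialFischer

section Coefficients

lemma descPochhammer_smeval_eq_prod_range {R : Type*} [CommRing R] (n : ℕ) (r : R) :
    (descPochhammer ℤ n).smeval r = ∏ j ∈ range n, (r - j) := by
  rw [← Polynomial.aeval_eq_smeval, ← descPochhammer_eval_eq_prod_range, Polynomial.aeval_def,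
    Polynomial.eval₂_eq_eval_map, descPochhammer_map]

lemma sum_choose_mul_prod_range_sub {R : Type*} [CommRing R] (x y : R) (s : ℕ) :
    ∑ j ∈ range (s + 1),
        (s.choose j : R) * ((∏ t ∈ range j, (x - t)) * ∏ t ∈ range (s - j), (y - t)) =
      ∏ t ∈ range s, (x + y - t) := by
  have h := Ring.descPochhammer_smeval_add s (Commute.all x y)
  simp only [descPochhammer_smeval_eq_prod_range] at h
  rw [h, Nat.sum_antidiagonal_eq_sum_range_succ
    fun i j => (s.choose i : R) * ((∏ t ∈ range i, (x - t)) * ∏ t ∈ range j, (y - t))]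

lemma exists_alternating_coeffs {K : Type*} [Field K] (A B : K) (s : ℕ)
    (hD : ∏ t ∈ range s, (A + B + s - 1 + t) ≠ 0) :
    ∃ c : ℕ → K,
      (∀ j < s, c j * ((s - j) * (A + s - 1 - j)) + c (j + 1) * ((j + 1) * (B + j)) = 0) ∧
      ∑ j ∈ range (s + 1), (-1) ^ j * c j = 1 ∧
      c 0 = (∏ t ∈ range s, (B + t)) / ∏ t ∈ range s, (A + B + s - 1 + t) := by
  set x := A + s - 1
  set y := B + s - 1
  have hreflect : ∀ z : K, ∏ t ∈ range s, (z + s - 1 - t) = ∏ t ∈ range s, (z + t) := fun z => by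
    rw [← prod_range_reflect]
    refine prod_congr rfl fun t ht => ?_
    rw [Nat.sub_sub, Nat.cast_sub (by have := mem_range.mp ht; omega)]
    push_cast
    ring
  have hxy : ∏ t ∈ range s, (x + y - t) = ∏ t ∈ range s, (A + B + s - 1 + t) := by
    rw [← hreflect]
    exact prod_congr rfl fun t _ => by ring
  -- `γ j / (x + y)_s` with falling factorials `(x)_j (y)_{s-j}` solves the recurrence
  set γ : ℕ → K := fun j =>
    (s.choose j : K) * ((∏ t ∈ range j, (x - t)) * ∏ t ∈ range (s - j), (y - t))
  have hγ_succ : ∀ j < s,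
      γ (j + 1) * ((j + 1) * (B + j)) = γ j * ((s - j) * (A + s - 1 - j)) := fun j hj => by
    obtain ⟨n, rfl⟩ : ∃ n, s = j + 1 + n := ⟨s - (j + 1), by omega⟩
    have hchoose := congrArg (Nat.cast (R := K)) (Nat.choose_succ_right_eq (j + 1 + n) j)
    simp only [γ, x, y, show j + 1 + n - j = n + 1 by omega, show j + 1 + n - (j + 1) = n by omega,
      prod_range_succ]
    push_cast [show j ≤ j + 1 + n by omega] at hchoose ⊢
    linear_combination (∏ t ∈ range j, (A + (j + 1 + n) - 1 - t)) *
      (∏ t ∈ range n, (B + (j + 1 + n) - 1 - t)) * (A + (j + 1 + n) - 1 - j) * (B + j) * hchoose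
  refine ⟨fun j => (-1) ^ j * γ j / ∏ t ∈ range s, (x + y - t), fun j hj => ?_, ?_, ?_⟩
  · linear_combination (-1) ^ (j + 1) / (∏ t ∈ range s, (x + y - t)) * hγ_succ j hj
  · have h : ∀ j, (-1 : K) ^ j * ((-1) ^ j * γ j / ∏ t ∈ range s, (x + y - t)) =
        γ j / ∏ t ∈ range s, (x + y - t) := fun j => by
      rw [← mul_div_assoc, ← mul_assoc, ← pow_add, ← two_mul, pow_mul, neg_one_sq, one_pow,
        one_mul]
    simp only [h, ← sum_div, γ, sum_choose_mul_prod_range_sub]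
    exact div_self (hxy ▸ hD)
  · simp [γ, y, hxy, hreflect]

end Coefficients

theorem IsHarmonicProjection.fischer_self_radialTerm {m k i s : ℕ} {S : Finset (Fin m)}
    {P Q H : MvPolynomial (Fin m) ℂ} (hP : P ∈ supported ℂ (S : Set (Fin m)))
    (hPk : P.IsHomogeneous k) (hP0 : lap m P = 0) (hQ : Q ∈ supported ℂ (↑Sᶜ : Set (Fin m)))
    (hQi : Q.IsHomogeneous i) (hQ0 : lap m Q = 0)
    (hH : IsHarmonicProjection m (radialTerm S P Q s 0) H) (c : ℕ → ℂ)
    (hc : ∀ j < s, c j * radialCoeff #S k (s - 1 - j) + c (j + 1) * radialCoeff #Sᶜ i j = 0)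
    (hc1 : ∑ j ∈ range (s + 1), (-1) ^ j * c j = 1) :
    fischer m H H = c 0 * (∏ t ∈ range s, (radialCoeff #S k t : ℂ)) * fischer m P P *
      fischer m Q Q := by
  have hPS : lapOn S P = 0 := (lapOn_eq_lapOn_univ_of_mem_supported hP).trans hP0
  have hQS : lapOn Sᶜ Q = 0 := (lapOn_eq_lapOn_univ_of_mem_supported hQ).trans hQ0
  have hH₀ : IsHarmonicProjection m (radialTerm S P Q s 0)
      (∑ j ∈ range (s + 1), c j • radialTerm S P Q (s - j) j) :=
    ⟨lapOn_univ_sum_smul_radialTerm_eq_zero hP hPk hPS hQ hQi hQS c hc,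
      sqNormOn_univ_dvd_radialTerm_sub_sum c hc1⟩
  rw [hH.unique hH₀, hH₀.fischer_self, fischer_sum_right,
    sum_eq_single_of_mem 0 (by simp), Nat.sub_zero, fischer_smul_right,
    fischer_radialTerm_self hP hPk hPS hQ]
  · ring
  · intro j hj hj0
    rw [fischer_smul_right, ← Nat.sub_add_cancel (mem_range_succ_iff.mp hj), Nat.add_sub_cancel,
      fischer_radialTerm_eq_zero_of_pos hP hPk hPS hQ _ (Nat.pos_of_ne_zero hj0), mul_zero]

lemma cast_radialCoeff (n k a : ℕ) :
    (radialCoeff n k a : ℂ) = 4 * ((a + 1) * (k + n / 2 + a)) := by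
  rw [radialCoeff]
  push_cast
  ring

lemma prod_radialCoeff (n k s : ℕ) :
    ∏ t ∈ range s, (radialCoeff n k t : ℂ) =
      2 ^ s * s.factorial * ∏ t ∈ range s, (2 * (k : ℂ) + n + 2 * t) := by
  simp only [radialCoeff, Nat.cast_mul, prod_mul_distrib, prod_const, card_range,
    ← prod_range_add_one_eq_factorial, Nat.cast_prod]
  push_cast
  exact congrArg _ (prod_congr rfl fun t _ => by ring)

lemma prod_half_add (a : ℂ) (s : ℕ) :
    ∏ t ∈ range s, (a / 2 + t) = (∏ t ∈ range s, (a + 2 * t)) / 2 ^ s := by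
  calc ∏ t ∈ range s, (a / 2 + t) = ∏ t ∈ range s, ((a + 2 * t) / 2) :=
        prod_congr rfl fun t _ => by ring
    _ = _ := by rw [prod_div_distrib, prod_const, card_range]

lemma prod_div_prod_mul_prod_radialCoeff (n n' k i s : ℕ) :
    (∏ t ∈ range s, ((i : ℂ) + n' / 2 + t)) /
        (∏ t ∈ range s, ((k : ℂ) + n / 2 + (i + n' / 2) + s - 1 + t)) *
        ∏ t ∈ range s, (radialCoeff n k t : ℂ) =
      2 ^ s * s.factorial * ∏ t ∈ range s, ((2 * (k : ℂ) + n + 2 * t) *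
        (2 * (i : ℂ) + n' + 2 * t) / (2 * (s : ℂ) + 2 * k + 2 * i + n + n' - 2 + 2 * t)) := by
  have hnum : ∏ t ∈ range s, ((i : ℂ) + n' / 2 + t) =
      (∏ t ∈ range s, (2 * (i : ℂ) + n' + 2 * t)) / 2 ^ s := by
    rw [← prod_half_add]
    exact prod_congr rfl fun t _ => by ring
  have hden : ∏ t ∈ range s, ((k : ℂ) + n / 2 + (i + n' / 2) + s - 1 + t) =
      (∏ t ∈ range s, (2 * (s : ℂ) + 2 * k + 2 * i + n + n' - 2 + 2 * t)) / 2 ^ s := by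
    rw [← prod_half_add]
    exact prod_congr rfl fun t _ => by ring
  rw [hnum, hden, div_div_div_cancel_right₀ (pow_ne_zero s two_ne_zero), prod_radialCoeff,
    prod_div_distrib, prod_mul_distrib]
  ring

theorem IsHarmonicProjection.fischer_self_radialTerm_eq {m k i s : ℕ} (hm : 0 < m)
    {S : Finset (Fin m)} {P Q H : MvPolynomial (Fin m) ℂ}
    (hP : P ∈ supported ℂ (S : Set (Fin m))) (hPk : P.IsHomogeneous k) (hP0 : lap m P = 0)
    (hQ : Q ∈ supported ℂ (↑Sᶜ : Set (Fin m))) (hQi : Q.IsHomogeneous i) (hQ0 : lap m Q = 0)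
    (hH : IsHarmonicProjection m (radialTerm S P Q s 0) H) :
    fischer m H H = 2 ^ s * s.factorial * (∏ t ∈ range s, ((2 * (k : ℂ) + #S + 2 * t) *
        (2 * (i : ℂ) + #Sᶜ + 2 * t) / (2 * (s : ℂ) + 2 * k + 2 * i + #S + #Sᶜ - 2 + 2 * t))) *
      fischer m P P * fischer m Q Q := by
  have hD : ∏ t ∈ range s, ((k : ℂ) + #S / 2 + (i + #Sᶜ / 2) + s - 1 + t) ≠ 0 :=
    prod_ne_zero_iff.mpr fun t ht => by
      have hm' : (1 : ℝ) ≤ #S + #Sᶜ := by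
        exact_mod_cast (card_add_card_compl S).trans (Fintype.card_fin m) ▸ hm
      have hts : (t : ℝ) + 1 ≤ s := by exact_mod_cast mem_range.mp ht
      have hpos : (0 : ℝ) < k + #S / 2 + (i + #Sᶜ / 2) + s - 1 + t := by
        linarith [k.cast_nonneg (α := ℝ), i.cast_nonneg (α := ℝ), t.cast_nonneg (α := ℝ)]
      have h := Complex.ofReal_ne_zero.mpr hpos.ne'
      push_cast at h
      exact h
  obtain ⟨c, hc, hc1, hc0⟩ := exists_alternating_coeffs _ _ s hD
  refine (hH.fischer_self_radialTerm hP hPk hP0 hQ hQi hQ0 c (fun j hj => ?_) hc1).trans ?_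
  · rw [cast_radialCoeff, cast_radialCoeff, Nat.sub_sub, Nat.cast_sub (by omega : 1 + j ≤ s)]
    push_cast
    linear_combination 4 * hc j hj
  · rw [hc0, prod_div_prod_mul_prod_radialCoeff]

theorem stmt10_general (p q s k i : ℕ) (hp : 1 ≤ p)
    (Pk Qi : MvPolynomial (Fin (p + q)) ℂ)
    (hPk_supp : Pk ∈ MvPolynomial.supported ℂ {j : Fin (p + q) | (j : ℕ) < p})
    (hPk_harm : lap (p + q) Pk = 0) (hPk_hom : Pk.IsHomogeneous k)
    (hQi_supp : Qi ∈ MvPolynomial.supported ℂ {j : Fin (p + q) | p ≤ (j : ℕ)})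
    (hQi_harm : lap (p + q) Qi = 0) (hQi_hom : Qi.IsHomogeneous i)
    (H : MvPolynomial (Fin (p + q)) ℂ) (hH_harm : lap (p + q) H = 0)
    (hH_diff : ∃ R, u2 p q ^ s * Pk * Qi - H = r2 (p + q) * R) :
    fischer (p + q) H H
      = (2 : ℂ) ^ s * (Nat.factorial s : ℂ) *
          (∏ t ∈ range s,
            ((2 * (k : ℂ) + (p : ℂ) + 2 * (t : ℂ)) * (2 * (i : ℂ) + (q : ℂ) + 2 * (t : ℂ)) /
              (2 * (s : ℂ) + 2 * (k : ℂ) + 2 * (i : ℂ) + (p : ℂ) + (q : ℂ) - 2 + 2 * (t : ℂ)))) *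
          fischer (p + q) Pk Pk * fischer (p + q) Qi Qi := by
  set S : Finset (Fin (p + q)) := univ.filter fun j => (j : ℕ) < p
  have hS : #S = p := by simp [S, Fin.card_filter_val_lt]
  have hSc : #Sᶜ = q := by rw [card_compl, hS, Fintype.card_fin, Nat.add_sub_cancel_left]
  have hH : IsHarmonicProjection (p + q) (radialTerm S Pk Qi s 0) H :=
    ⟨hH_harm, by rw [radialTerm, pow_zero, one_mul]; exact hH_diff⟩
  rw [hH.fischer_self_radialTerm_eq (by omega) (by simpa [S] using hPk_supp) hPk_hom hPk_harm
    (by simpa [S] using hQi_supp) hQi_hom hQi_harm, hS, hSc]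

theorem stmt10 (p q s k i : ℕ) (hp : 1 ≤ p) (hq : 1 ≤ q)
    (Pk Qi : MvPolynomial (Fin (p + q)) ℂ)
    (hPk_supp : Pk ∈ MvPolynomial.supported ℂ {j : Fin (p + q) | (j : ℕ) < p})
    (hPk_harm : lap (p + q) Pk = 0) (hPk_hom : Pk.IsHomogeneous k)
    (hQi_supp : Qi ∈ MvPolynomial.supported ℂ {j : Fin (p + q) | p ≤ (j : ℕ)})
    (hQi_harm : lap (p + q) Qi = 0) (hQi_hom : Qi.IsHomogeneous i)
    (H : MvPolynomial (Fin (p + q)) ℂ) (hH_harm : lap (p + q) H = 0)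
    (hH_diff : ∃ R, u2 p q ^ s * Pk * Qi - H = r2 (p + q) * R) :
    fischer (p + q) H H
      = (2 : ℂ) ^ s * (Nat.factorial s : ℂ) *
          (∏ t ∈ range s,
            ((2 * (k : ℂ) + (p : ℂ) + 2 * (t : ℂ)) * (2 * (i : ℂ) + (q : ℂ) + 2 * (t : ℂ)) /
              (2 * (s : ℂ) + 2 * (k : ℂ) + 2 * (i : ℂ) + (p : ℂ) + (q : ℂ) - 2 + 2 * (t : ℂ)))) *
          fischer (p + q) Pk Pk * fischer (p + q) Qi Qi :=
  stmt10_general p q s k i hp Pk Qi hPk_supp hPk_harm hPk_hom hQi_supp hQi_harm hQi_hom H hH_harm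
    hH_diff

end
end
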